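/- Let P : ℝ^d → Mat_N(ℂ) be smooth. (1) If (w₀,λ₀) ∈ Ω₁(P) \ Ξ(P), then there exist a neighborhood U of w₀ in ℝ^d, a neighborhood W of (w₀,λ₀) in ℝ^d × ℂ, and a smooth function λ : U → ℂ with λ(w₀) = λ₀ such that for all (w,μ) ∈ W one has det(P(w) − μI) = 0 if and only if μ = λ(w); moreover any two smooth functions with this property agree on a neighborhood of w₀. (2) If λ₀ ∈ Σ(P) \ (Σ_ws(P) ∪ Σ_∞(P)), then there exist an open set U ⊇ Σ_{λ₀}(P), a neighborhood W of Σ_{λ₀}(P) × {λ₀} in ℝ^d × ℂ, and a smooth λ : U → ℂ such that for all (w,μ) ∈ W one has det(P(w) − μI) = 0 if and only if μ = λ(w). -/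

import Mathlib

open Filter Topology Matrix

variable {E : Type*} [NormedAddCommGroup E] {N : ℕ}

/-- The characteristic determinant `p(w, z) = det (P(w) − z I)`. -/
noncomputable def charDet (P : E → Matrix (Fin N) (Fin N) ℂ) (w : E) (z : ℂ) : ℂ :=
  (P w - z • (1 : Matrix (Fin N) (Fin N) ℂ)).det

/-- `K_P(w, z)`: the largest `k` such that `∂_z^j p(w, z) = 0` for all `j < k`. -/
noncomputable def KP (P : E → Matrix (Fin N) (Fin N) ℂ) (w : E) (z : ℂ) : ℕ :=
  sSup {k : ℕ | ∀ j < k, iteratedDeriv j (charDet P w) z = 0}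

/-- `Ω_k(P) = {(w, z) : K_P(w, z) ≥ k}`. -/
noncomputable def OmegaSet (P : E → Matrix (Fin N) (Fin N) ℂ) (k : ℕ) : Set (E × ℂ) :=
  {p : E × ℂ | k ≤ KP P p.1 p.2}

/-- `Ξ(P) = ⋃_{j ≥ 2} ∂Ω_j(P)`, boundaries taken relative to `Ω_1(P)`. -/
noncomputable def XiSet (P : E → Matrix (Fin N) (Fin N) ℂ) : Set (E × ℂ) :=
  ⋃ j : ℕ, ⋃ _ : 2 ≤ j,
    Subtype.val '' frontier {q : OmegaSet P 1 | (q : E × ℂ) ∈ OmegaSet P j}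

/-- `Σ_z(P) = {w : det (P(w) − z I) = 0}`. -/
noncomputable def SigmaLam (P : E → Matrix (Fin N) (Fin N) ℂ) (z : ℂ) : Set E :=
  {w : E | charDet P w z = 0}

/-- `Σ(P)`: the closure of the set of eigenvalues of `P`. -/
noncomputable def SigmaSet (P : E → Matrix (Fin N) (Fin N) ℂ) : Set ℂ :=
  closure {z : ℂ | ∃ w : E, charDet P w z = 0}

/-- The weakly singular eigenvalue set `Σ_ws(P) = π₂(Ξ(P))`. -/
noncomputable def SigmaWs (P : E → Matrix (Fin N) (Fin N) ℂ) : Set ℂ :=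
  Prod.snd '' XiSet P

/-- The strongly singular eigenvalue set `Σ_ss(P)`. -/
noncomputable def SigmaSs (P : E → Matrix (Fin N) (Fin N) ℂ) : Set ℂ :=
  {z : ℂ | (SigmaLam P z).Nonempty ∧ ∀ w ∈ SigmaLam P z, (w, z) ∈ XiSet P}

/-- `Σ_∞(P)`: eigenvalues at infinity. -/
noncomputable def SigmaInf (P : E → Matrix (Fin N) (Fin N) ℂ) : Set ℂ :=
  {z : ℂ | ∃ (w : ℕ → E) (u : ℕ → EuclideanSpace ℂ (Fin N)),
    (∀ j, u j ≠ 0) ∧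
    Tendsto (fun j => ‖w j‖) atTop atTop ∧
    Tendsto (fun j => ‖Matrix.toEuclideanLin (P (w j)) (u j) - z • u j‖ / ‖u j‖)
      atTop (nhds 0)}

/-!
`K_P(w, λ)` is the multiplicity of `λ` as a root of the characteristic polynomial of `P(w)`.
Let `m = K_P(w₀, λ₀)`. Off `Ξ(P)` the eigenvalues near `(w₀, λ₀)` still have multiplicity
`≥ m`, so they are zeros of `q = ∂_λ^{m-1} p`, while `∂_λ q = ∂_λ^m p ≠ 0` at `(w₀, λ₀)`. The
implicit function theorem makes the zero set of `q` near `(w₀, λ₀)` the graph of a smooth `λ(w)`,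
and continuity of the roots of `p(w, ·)` in `w` shows that `λ(w)` is indeed an eigenvalue.
For (2), the local graphs at the points of `Σ_{λ₀}(P)` are glued: on overlaps they agree, each
being the only eigenvalue in its ball around `λ₀`.
-/

namespace Polynomial

section Analysis

variable {𝕜 : Type*} [NontriviallyNormedField 𝕜]

theorem iteratedDeriv_eval (p : 𝕜[X]) (j : ℕ) :
    iteratedDeriv j (fun z => p.eval z) = fun z => (derivative^[j] p).eval z := by
  induction j generalizing p with
  | zero => simp
  | succ j ih =>
    rw [iteratedDeriv_succ', Function.iterate_succ_apply, ← ih,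
      show deriv (fun z => p.eval z) = fun z => (derivative p).eval z from
      _root_.funext fun z => p.deriv]

theorem le_rootMultiplicity_iff_iteratedDeriv_eq_zero [CharZero 𝕜] {p : 𝕜[X]} (hp : p ≠ 0)
    {t : 𝕜} {k : ℕ} :
    k ≤ p.rootMultiplicity t ↔ ∀ j < k, iteratedDeriv j (fun z => p.eval z) t = 0 := by
  simp only [iteratedDeriv_eval]
  cases k with
  | zero => simp
  | succ k =>
    rw [Nat.succ_le_iff, lt_rootMultiplicity_iff_isRoot_iterate_derivative hp]
    simp [IsRoot]

variable {K : Type*} [NormedSpace 𝕜 E] [NormedField K] [NormedAlgebra 𝕜 K] {n : WithTop ℕ∞}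
  {F : E → K[X]} {d : ℕ}

-- A polynomial of degree `≤ d` is the Lagrange interpolant of its values at `0, 1, …, d`.
theorem contDiff_coeff_of_contDiff_eval [CharZero K] (hdeg : ∀ x, (F x).natDegree ≤ d)
    (hF : ∀ z, ContDiff 𝕜 n fun x => (F x).eval z) (k : ℕ) :
    ContDiff 𝕜 n fun x => (F x).coeff k := by
  let v : Fin (d + 1) → K := fun i => (i : ℕ)
  have hv : Set.InjOn v (Finset.univ : Finset (Fin (d + 1))) := fun a _ b _ hab =>
    Fin.val_injective (Nat.cast_injective hab)
  have hinterp (x : E) : F x = Lagrange.interpolate Finset.univ v (fun i => (F x).eval (v i)) := by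
    refine Lagrange.eq_interpolate hv (degree_le_natDegree.trans_lt ?_)
    simpa using Nat.cast_lt.mpr (Nat.lt_succ_of_le (hdeg x))
  have hcoeff : (fun x => (F x).coeff k) =
      fun x => ∑ i, (F x).eval (v i) * (Lagrange.basis Finset.univ v i).coeff k := by
    ext x
    conv_lhs => rw [hinterp x]
    simp only [Lagrange.interpolate_apply, finsetSum_coeff, coeff_C_mul]
  rw [hcoeff]
  exact ContDiff.sum fun i _ => (hF (v i)).mul contDiff_const

theorem contDiff_eval_of_contDiff_coeff (hdeg : ∀ x, (F x).natDegree ≤ d)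
    (hF : ∀ k, ContDiff 𝕜 n fun x => (F x).coeff k) :
    ContDiff 𝕜 n fun p : E × K => (F p.1).eval p.2 := by
  have h : (fun p : E × K => (F p.1).eval p.2) =
      fun p => ∑ k ∈ Finset.range (d + 1), (F p.1).coeff k * p.2 ^ k :=
    _root_.funext fun p => eval_eq_sum_range' (Nat.lt_succ_of_le (hdeg p.1)) p.2
  rw [h]
  exact ContDiff.sum fun k _ => ((hF k).comp contDiff_fst).mul (contDiff_snd.pow k)

theorem contDiff_eval_iterate_derivative [CharZero K] (hdeg : ∀ x, (F x).natDegree ≤ d)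
    (hF : ∀ z, ContDiff 𝕜 n fun x => (F x).eval z) (j : ℕ) :
    ContDiff 𝕜 n fun p : E × K => (derivative^[j] (F p.1)).eval p.2 := by
  refine contDiff_eval_of_contDiff_coeff (d := d)
    (fun x => (natDegree_iterate_derivative _ _).trans ((Nat.sub_le _ _).trans (hdeg x)))
    fun k => ?_
  simp only [coeff_iterate_derivative, nsmul_eq_mul]
  exact contDiff_const.mul (contDiff_coeff_of_contDiff_eval hdeg hF _)

end Analysis

theorem exists_isRoot_norm_sub_lt {K : Type*} [NormedField K] [IsAlgClosed K] {p : K[X]}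
    (hp : p.Monic) {z : K} {δ : ℝ} (hδ : 0 ≤ δ) (h : ‖p.eval z‖ < δ ^ p.natDegree) :
    ∃ r, p.IsRoot r ∧ ‖r - z‖ < δ := by
  by_contra! hfar
  have hsplit : p.Splits := IsAlgClosed.splits p
  have hprod : δ ^ p.natDegree ≤ ‖p.eval z‖ := by
    rw [hsplit.eval_eq_prod_roots_of_monic hp, ← normHom_apply,
      map_multiset_prod (normHom : K →*₀ ℝ), Multiset.map_map, hsplit.natDegree_eq_card_roots,
      ← Multiset.prod_replicate, ← Multiset.map_const']
    refine Multiset.prod_map_le_prod_map₀ _ _ (fun _ _ => hδ) fun r hr => ?_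
    rw [Function.comp_apply, normHom_apply, norm_sub_rev]
    exact hfar r (isRoot_of_mem_roots hr)
  exact h.not_ge hprod

theorem eventually_exists_isRoot_norm_sub_lt {X K : Type*} [TopologicalSpace X]
    [NormedField K] [IsAlgClosed K] {F : X → K[X]} {d : ℕ} (hmonic : ∀ x, (F x).Monic)
    (hdeg : ∀ x, (F x).natDegree = d) {x₀ : X} {z₀ : K}
    (hcont : ContinuousAt (fun x => (F x).eval z₀) x₀) (hroot : (F x₀).IsRoot z₀) {ε : ℝ}
    (hε : 0 < ε) : ∀ᶠ x in 𝓝 x₀, ∃ r, (F x).IsRoot r ∧ ‖r - z₀‖ < ε := by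
  have hsmall : ∀ᶠ x in 𝓝 x₀, ‖(F x).eval z₀‖ < ε ^ d := by
    have := hcont.norm
    rw [ContinuousAt, hroot.eq_zero, norm_zero] at this
    exact this.eventually (gt_mem_nhds (pow_pos hε d))
  filter_upwards [hsmall] with x hx
  exact exists_isRoot_norm_sub_lt (hmonic x) hε.le (by rwa [hdeg])

end Polynomial

theorem ContDiff.matrix_det {𝕜 R ι : Type*} [NontriviallyNormedField 𝕜] [NormedSpace 𝕜 E]
    [NormedCommRing R] [NormedAlgebra 𝕜 R] [Fintype ι] [DecidableEq ι]
    {n : WithTop ℕ∞} {A : E → Matrix ι ι R} (hA : ∀ i j, ContDiff 𝕜 n fun x => A x i j) :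
    ContDiff 𝕜 n fun x => (A x).det := by
  simp only [det_apply']
  exact ContDiff.sum fun σ _ => contDiff_const.mul (contDiff_prod fun i _ => hA _ _)

theorem eventually_forall_mem_of_notMem_frontier {X : Type*} [TopologicalSpace X] {A : Set X}
    {S : Set A} {a : A} (ha : a ∈ S) (hfr : a ∉ frontier S) :
    ∀ᶠ x in 𝓝 (a : X), ∀ hx : x ∈ A, (⟨x, hx⟩ : A) ∈ S := by
  have hint : a ∈ interior S := by
    rw [← closure_sdiff_frontier]
    exact ⟨subset_closure ha, hfr⟩
  obtain ⟨t, ht, hts⟩ := (mem_nhds_subtype _ _ _).1 (mem_interior_iff_mem_nhds.1 hint)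
  filter_upwards [ht] with x hx hxA using hts hx

open Polynomial

section CharDet

variable {X : Type*}

theorem charDet_eq (P : X → Matrix (Fin N) (Fin N) ℂ) (w : X) (z : ℂ) :
    charDet P w z = ((-1) ^ N * (P w).charpoly).eval z := by
  rw [charDet, eval_mul, eval_charpoly, ← neg_sub, det_neg]
  simp [smul_one_eq_diagonal]

theorem charDet_eq_zero_iff {P : X → Matrix (Fin N) (Fin N) ℂ} {w : X} {z : ℂ} :
    charDet P w z = 0 ↔ (P w).charpoly.IsRoot z := by
  simp [charDet_eq, IsRoot]

theorem KP_eq_rootMultiplicity (P : X → Matrix (Fin N) (Fin N) ℂ) (w : X) (z : ℂ) :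
    KP P w z = (P w).charpoly.rootMultiplicity z := by
  have hne : (-1) ^ N * (P w).charpoly ≠ 0 :=
    mul_ne_zero (pow_ne_zero _ (neg_ne_zero.2 one_ne_zero)) (charpoly_monic _).ne_zero
  have hset : {k : ℕ | ∀ j < k, iteratedDeriv j (charDet P w) z = 0} =
      Set.Iic (((-1) ^ N * (P w).charpoly).rootMultiplicity z) := by
    ext k
    rw [Set.mem_Iic, le_rootMultiplicity_iff_iteratedDeriv_eq_zero hne]
    simp only [← charDet_eq, Set.mem_ofPred_eq]
  rw [KP, hset, csSup_Iic, rootMultiplicity_mul hne, rootMultiplicity_eq_zero, zero_add]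
  simp [IsRoot]

theorem mem_omegaSet_one_iff {P : X → Matrix (Fin N) (Fin N) ℂ} {p : X × ℂ} :
    p ∈ OmegaSet P 1 ↔ charDet P p.1 p.2 = 0 := by
  rw [OmegaSet, Set.mem_ofPred_eq, KP_eq_rootMultiplicity, Nat.one_le_iff_ne_zero,
    ← pos_iff_ne_zero, rootMultiplicity_pos (charpoly_monic _).ne_zero, charDet_eq_zero_iff]

theorem eventually_mem_omegaSet_KP {P : E → Matrix (Fin N) (Fin N) ℂ} {a : E × ℂ}
    (ha : a ∈ OmegaSet P 1 \ XiSet P) :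
    ∀ᶠ p in 𝓝 a, p ∈ OmegaSet P 1 → p ∈ OmegaSet P (KP P a.1 a.2) := by
  rcases le_or_gt (KP P a.1 a.2) 1 with hle | hlt
  · exact Eventually.of_forall fun p hp => hle.trans hp
  · have hfr : (⟨a, ha.1⟩ : OmegaSet P 1) ∉
        frontier {q : OmegaSet P 1 | (q : E × ℂ) ∈ OmegaSet P (KP P a.1 a.2)} :=
      fun hfr => ha.2 (Set.mem_iUnion₂.2 ⟨_, hlt, _, hfr, rfl⟩)
    filter_upwards [eventually_forall_mem_of_notMem_frontier (le_refl (KP P a.1 a.2)) hfr]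
      with p hp hp1 using hp hp1

variable [NormedSpace ℝ E] {n : WithTop ℕ∞} {P : E → Matrix (Fin N) (Fin N) ℂ}

theorem contDiff_eval_charpoly (hP : ∀ i j, ContDiff ℝ n fun w => P w i j) (z : ℂ) :
    ContDiff ℝ n fun w => (P w).charpoly.eval z := by
  simp only [eval_charpoly]
  exact ContDiff.matrix_det fun i j => contDiff_const.sub (hP i j)

theorem contDiff_eval_iterate_derivative_charpoly (hP : ∀ i j, ContDiff ℝ n fun w => P w i j)
    (j : ℕ) : ContDiff ℝ n fun p : E × ℂ => (derivative^[j] (P p.1).charpoly).eval p.2 :=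
  contDiff_eval_iterate_derivative (d := N) (fun w => by simp [charpoly_natDegree_eq_dim])
    (contDiff_eval_charpoly hP) j

end CharDet

section Implicit

variable {𝕜 : Type*} [RCLike 𝕜] [NormedSpace ℝ E] {n : WithTop ℕ∞}
  {Q Qz : E × 𝕜 → 𝕜}

theorem isInvertible_fderiv_comp_inr {u : E × 𝕜} (hQ : DifferentiableAt ℝ Q u)
    (hz : HasDerivAt (fun z => Q (u.1, z)) (Qz u) u.2) (hc : Qz u ≠ 0) :
    (fderiv ℝ Q u ∘L ContinuousLinearMap.inr ℝ E 𝕜).IsInvertible := by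
  have h₁ : HasFDerivAt (fun z => Q (u.1, z)) (fderiv ℝ Q u ∘L .inr ℝ E 𝕜) u.2 :=
    hQ.hasFDerivAt.comp u.2 ((hasFDerivAt_const u.1 u.2).prodMk (hasFDerivAt_id u.2))
  rw [h₁.unique (hz.hasFDerivAt.restrictScalars ℝ)]
  refine .of_inverse (g := ((1 : 𝕜 →L[𝕜] 𝕜).smulRight (Qz u)⁻¹).restrictScalars ℝ) ?_ ?_ <;>
    ext v <;> simp [hc]

variable [CompleteSpace E] (hn : n ≠ 0) (hQ : ContDiff ℝ n Q)
  (hQz : ∀ p, HasDerivAt (fun z => Q (p.1, z)) (Qz p) p.2)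
include hn hQ hQz

-- Near each of its points, `g` coincides with the implicit function given there.
theorem contDiffOn_of_implicit {g : E → 𝕜} {U : Set E} (hU : IsOpen U) (hg : ContinuousOn g U)
    (hzero : ∀ w ∈ U, Q (w, g w) = 0) (hne : ∀ w ∈ U, Qz (w, g w) ≠ 0) :
    ContDiffOn ℝ n g U := by
  intro w hw
  have hinv := isInvertible_fderiv_comp_inr ((hQ.differentiable hn) (w, g w)) (hQz _) (hne w hw)
  have cdf : ContDiffAt ℝ n Q (w, g w) := hQ.contDiffAt
  have hgraph : ∀ᶠ x in 𝓝 w, Q (x, g x) = Q (w, g w) ↔ cdf.implicitFunction hn hinv x = g x :=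
    Tendsto.eventually (continuousAt_id.prodMk (hg.continuousAt (hU.mem_nhds hw)))
      (cdf.eventually_apply_eq_iff_implicitFunction hn hinv)
  have heq : cdf.implicitFunction hn hinv =ᶠ[𝓝 w] g := by
    filter_upwards [hgraph, hU.mem_nhds hw] with x hx hxU
    exact hx.1 (by rw [hzero x hxU, hzero w hw])
  exact ((cdf.contDiffAt_implicitFunction hn hinv).congr_of_eventuallyEq heq.symm).contDiffWithinAt

theorem exists_contDiffOn_implicit {a : E × 𝕜} (hQzc : ContinuousAt Qz a) (ha : Q a = 0)
    (haz : Qz a ≠ 0) :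
    ∃ g : E → 𝕜, ∃ U, IsOpen U ∧ a.1 ∈ U ∧ ContDiffOn ℝ n g U ∧ g a.1 = a.2 ∧
      ∀ᶠ p in 𝓝 a, Q p = 0 ↔ p.2 = g p.1 := by
  have hinv := isInvertible_fderiv_comp_inr ((hQ.differentiable hn) a) (hQz a) haz
  have cdf : ContDiffAt ℝ n Q a := hQ.contDiffAt
  set g := cdf.implicitFunction hn hinv
  have hgC : ContDiffAt ℝ n g a.1 := cdf.contDiffAt_implicitFunction hn hinv
  have hga : g a.1 = a.2 := cdf.implicitFunction_apply_self hn hinv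
  have hcont : ∀ᶠ w in 𝓝 a.1, ContinuousAt g w :=
    ((hgC.of_le (ENat.one_le_iff_ne_zero_withTop.2 hn)).eventually (by simp)).mono
      fun w hw => hw.continuousAt
  have hzero : ∀ᶠ w in 𝓝 a.1, Q (w, g w) = 0 := by
    simpa [ha] using cdf.eventually_apply_implicitFunction hn hinv
  have hne : ∀ᶠ w in 𝓝 a.1, Qz (w, g w) ≠ 0 := by
    have : ContinuousAt (fun w => Qz (w, g w)) a.1 :=
      ContinuousAt.comp (by rwa [hga]) (continuousAt_id.prodMk hgC.continuousAt)
    exact this.eventually_ne (by rwa [hga])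
  obtain ⟨U, hUgood, hUo, haU⟩ := eventually_nhds_iff.1 (hcont.and (hzero.and hne))
  refine ⟨g, U, hUo, haU, contDiffOn_of_implicit hn hQ hQz hUo
    (fun w hw => (hUgood w hw).1.continuousWithinAt) (fun w hw => (hUgood w hw).2.1)
    (fun w hw => (hUgood w hw).2.2), hga, ?_⟩
  filter_upwards [cdf.eventually_apply_eq_iff_implicitFunction hn hinv] with p hp
  rw [ha] at hp
  exact hp.trans eq_comm

end Implicit

section LocalEigenvalue

variable [NormedSpace ℝ E] [CompleteSpace E] {n : WithTop ℕ∞} {P : E → Matrix (Fin N) (Fin N) ℂ}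

theorem exists_contDiffOn_eq_of_charDet_eq_zero (hn : n ≠ 0)
    (hP : ∀ i j, ContDiff ℝ n fun w => P w i j) {a : E × ℂ} (ha : a ∈ OmegaSet P 1 \ XiSet P) :
    ∃ g : E → ℂ, ∃ U, IsOpen U ∧ a.1 ∈ U ∧ ContDiffOn ℝ n g U ∧ g a.1 = a.2 ∧
      ∀ᶠ p in 𝓝 a, charDet P p.1 p.2 = 0 → p.2 = g p.1 := by
  set m := KP P a.1 a.2
  have hm : 1 ≤ m := ha.1
  have hmult : m = (P a.1).charpoly.rootMultiplicity a.2 := KP_eq_rootMultiplicity _ _ _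
  have hderiv (p : E × ℂ) : HasDerivAt (fun z => (derivative^[m - 1] (P p.1).charpoly).eval z)
      ((derivative^[m] (P p.1).charpoly).eval p.2) p.2 := by
    have := (derivative^[m - 1] (P p.1).charpoly).hasDerivAt p.2
    rwa [← Function.iterate_succ_apply' derivative, Nat.succ_eq_add_one, Nat.sub_add_cancel hm]
      at this
  have hroot : (derivative^[m - 1] (P a.1).charpoly).IsRoot a.2 :=
    isRoot_iterate_derivative_of_lt_rootMultiplicity (by omega)
  have hne : ¬ (derivative^[m] (P a.1).charpoly).IsRoot a.2 := by
    intro h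
    have : m < (P a.1).charpoly.rootMultiplicity a.2 :=
      (lt_rootMultiplicity_iff_isRoot_iterate_derivative (charpoly_monic _).ne_zero).2
        fun j hj => by
          rcases hj.lt_or_eq with hj | rfl
          · exact isRoot_iterate_derivative_of_lt_rootMultiplicity (hmult ▸ hj)
          · exact h
    omega
  obtain ⟨g, U, hUo, haU, hg, hga, hgraph⟩ := exists_contDiffOn_implicit hn
    (contDiff_eval_iterate_derivative_charpoly hP (m - 1)) hderiv
    (contDiff_eval_iterate_derivative_charpoly hP m).continuous.continuousAt hroot hne
  refine ⟨g, U, hUo, haU, hg, hga, ?_⟩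
  filter_upwards [hgraph, eventually_mem_omegaSet_KP ha] with p hpg hpΩ hp
  refine hpg.1 (isRoot_iterate_derivative_of_lt_rootMultiplicity ?_)
  have := hpΩ (mem_omegaSet_one_iff.2 hp)
  rw [OmegaSet, Set.mem_ofPred_eq, KP_eq_rootMultiplicity P p.1 p.2] at this
  omega

theorem exists_local_eigenvalue_graph (hn : n ≠ 0) (hP : ∀ i j, ContDiff ℝ n fun w => P w i j)
    {a : E × ℂ} (ha : a ∈ OmegaSet P 1 \ XiSet P) :
    ∃ U : Set E, IsOpen U ∧ a.1 ∈ U ∧ ∃ ε > 0, ∃ g : E → ℂ, ContDiffOn ℝ n g U ∧ g a.1 = a.2 ∧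
      ∀ w ∈ U, ∀ z ∈ Metric.ball a.2 ε, charDet P w z = 0 ↔ z = g w := by
  obtain ⟨g, U₀, hU₀o, haU₀, hg, hga, hgraph⟩ := exists_contDiffOn_eq_of_charDet_eq_zero hn hP ha
  obtain ⟨U₁, hU₁, V, hV, hUV⟩ := mem_nhds_prod_iff.1 (show _ ∈ 𝓝 (a.1, a.2) from hgraph)
  obtain ⟨ε, hε, hball⟩ := Metric.mem_nhds_iff.1 hV
  have hnear := eventually_exists_isRoot_norm_sub_lt (d := N) (fun w => charpoly_monic (P w))
    (fun w => by simp [charpoly_natDegree_eq_dim])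
    (contDiff_eval_charpoly hP a.2).continuous.continuousAt
    (charDet_eq_zero_iff.1 (mem_omegaSet_one_iff.1 ha.1)) hε
  obtain ⟨U, hUgood, hUo, haU⟩ := eventually_nhds_iff.1
    ((hU₀o.eventually_mem haU₀).and ((Filter.eventually_mem_set.2 hU₁).and hnear))
  refine ⟨U, hUo, haU, ε, hε, g, hg.mono fun w hw => (hUgood w hw).1, hga, fun w hw z hz =>
    ⟨fun h => hUV (Set.mk_mem_prod (hUgood w hw).2.1 (hball hz)) h, ?_⟩⟩
  rintro rfl
  obtain ⟨r, hr, hrz⟩ := (hUgood w hw).2.2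
  have hr' := charDet_eq_zero_iff.2 hr
  have hrg : r = g w :=
    hUV (Set.mk_mem_prod (hUgood w hw).2.1 (hball (mem_ball_iff_norm.2 hrz))) hr'
  rwa [hrg] at hr'

end LocalEigenvalue

section Graph

variable {X Y : Type*} [TopologicalSpace X] [TopologicalSpace Y] {Z : Set (X × Y)}

theorem eventuallyEq_of_eventually_mem_iff_eq {x₀ : X} {y₀ : Y} {f₁ f₂ : X → Y}
    (hf₁ : ContinuousAt f₁ x₀) (hx₀ : f₁ x₀ = y₀)
    (h₁ : ∀ᶠ p in 𝓝 (x₀, y₀), p ∈ Z ↔ p.2 = f₁ p.1)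
    (h₂ : ∀ᶠ p in 𝓝 (x₀, y₀), p ∈ Z ↔ p.2 = f₂ p.1) : f₁ =ᶠ[𝓝 x₀] f₂ := by
  have : Tendsto (fun x => (x, f₁ x)) (𝓝 x₀) (𝓝 (x₀, y₀)) :=
    hx₀ ▸ continuousAt_id.prodMk hf₁
  filter_upwards [this.eventually (h₁.and h₂)] with x hx
  exact hx.2.1 (hx.1.2 rfl)

end Graph

section Gluing

variable {𝕜 F : Type*} [NontriviallyNormedField 𝕜] [NormedSpace 𝕜 E] [NormedAddCommGroup F]
  [NormedSpace 𝕜 F] {n : WithTop ℕ∞}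

-- Where two local graphs overlap, the value of the one with the smaller `ε` lies in the larger
-- ball too, so the other graph passes through it.
theorem exists_contDiffOn_graph_of_forall_local (Z : Set (E × F)) (S : Set E) (y₀ : F)
    (hloc : ∀ x ∈ S, ∃ U : Set E, IsOpen U ∧ x ∈ U ∧ ∃ ε > 0, ∃ f : E → F,
      ContDiffOn 𝕜 n f U ∧ f x = y₀ ∧ ∀ w ∈ U, ∀ y ∈ Metric.ball y₀ ε, (w, y) ∈ Z ↔ y = f w) :
    ∃ U : Set E, IsOpen U ∧ S ⊆ U ∧ ∃ W ∈ 𝓝ˢ (S ×ˢ ({y₀} : Set F)), ∃ g : E → F,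
      ContDiffOn 𝕜 n g U ∧ ∀ p ∈ W, p ∈ Z ↔ p.2 = g p.1 := by
  classical
  choose! U hUo hxU ε hε f hf hfx hgraph using hloc
  set V : E → Set E := fun x => U x ∩ f x ⁻¹' Metric.ball y₀ (ε x)
  have hVo (x) (hx : x ∈ S) : IsOpen (V x) :=
    (hf x hx).continuousOn.isOpen_inter_preimage (hUo x hx) Metric.isOpen_ball
  have hxV (x) (hx : x ∈ S) : x ∈ V x :=
    ⟨hxU x hx, by simp [hfx x hx, hε x hx]⟩
  have hagree (x) (hx : x ∈ S) (x') (hx' : x' ∈ S) (w) (hw : w ∈ V x) (hw' : w ∈ V x') :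
      f x w = f x' w := by
    wlog hle : ε x ≤ ε x' generalizing x x'
    · exact (this x' hx' x hx hw' hw (le_of_not_ge hle)).symm
    exact (hgraph x' hx' w hw'.1 _ (Metric.ball_subset_ball hle hw.2)).1
      ((hgraph x hx w hw.1 _ hw.2).2 rfl)
  let g : E → F := fun w => if h : ∃ x ∈ S, w ∈ V x then f h.choose w else 0
  have hg (x) (hx : x ∈ S) (w) (hw : w ∈ V x) : g w = f x w := by
    have h : ∃ x ∈ S, w ∈ V x := ⟨x, hx, hw⟩
    simp only [g, dif_pos h]
    exact hagree _ h.choose_spec.1 x hx w h.choose_spec.2 hw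
  refine ⟨⋃ x ∈ S, V x, isOpen_biUnion hVo, fun x hx => Set.mem_biUnion hx (hxV x hx),
    ⋃ x ∈ S, V x ×ˢ Metric.ball y₀ (ε x), ?_, g, ?_, ?_⟩
  · refine (isOpen_biUnion fun x hx => (hVo x hx).prod Metric.isOpen_ball).mem_nhdsSet.2 ?_
    rintro ⟨x, y⟩ ⟨hx, rfl⟩
    exact Set.mem_biUnion hx ⟨hxV x hx, Metric.mem_ball_self (hε x hx)⟩
  · intro w hw
    obtain ⟨x, hx, hwx⟩ := Set.mem_iUnion₂.1 hw
    refine (((hf x hx).contDiffAt ((hUo x hx).mem_nhds hwx.1)).congr_of_eventuallyEq ?_)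
      |>.contDiffWithinAt
    exact Filter.eventually_of_mem ((hVo x hx).mem_nhds hwx) (hg x hx)
  · rintro ⟨w, y⟩ hp
    obtain ⟨x, hx, hwx, hy⟩ := Set.mem_iUnion₂.1 hp
    rw [hg x hx w hwx]
    exact hgraph x hx w hwx.1 y hy

end Gluing

/-- **Lemma 2.15.** (1) If `(w₀, λ₀) ∈ Ω₁(P) \ Ξ(P)` then near `(w₀, λ₀)` the characteristic
set is the graph of a unique smooth germ of eigenvalues `λ(w)` with `λ(w₀) = λ₀`.
(2) If `λ₀ ∈ Σ(P) \ (Σ_ws(P) ∪ Σ_∞(P))` then there is a smooth `λ(w)` on a neighborhood of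
`Σ_{λ₀}(P)` whose graph is the characteristic set near `Σ_{λ₀}(P) × {λ₀}`. -/
theorem germ_of_eigenvalues {d N : ℕ}
    (P : EuclideanSpace ℝ (Fin d) → Matrix (Fin N) (Fin N) ℂ)
    (hsmooth : ∀ i j, ContDiff ℝ (⊤ : ℕ∞) fun w => P w i j) :
    (∀ (w₀ : EuclideanSpace ℝ (Fin d)) (lam₀ : ℂ),
      (w₀, lam₀) ∈ OmegaSet P 1 \ XiSet P →
      ((∃ U ∈ 𝓝 w₀, ∃ W ∈ 𝓝 (w₀, lam₀), ∃ lamf : EuclideanSpace ℝ (Fin d) → ℂ,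
          ContDiffOn ℝ (⊤ : ℕ∞) lamf U ∧ lamf w₀ = lam₀ ∧
          ∀ p ∈ W, (charDet P p.1 p.2 = 0 ↔ p.2 = lamf p.1)) ∧
        (∀ lam₁ lam₂ : EuclideanSpace ℝ (Fin d) → ℂ,
          (∃ U₁ ∈ 𝓝 w₀, ContDiffOn ℝ (⊤ : ℕ∞) lam₁ U₁) → lam₁ w₀ = lam₀ →
          (∃ W₁ ∈ 𝓝 (w₀, lam₀), ∀ p ∈ W₁, (charDet P p.1 p.2 = 0 ↔ p.2 = lam₁ p.1)) →
          (∃ U₂ ∈ 𝓝 w₀, ContDiffOn ℝ (⊤ : ℕ∞) lam₂ U₂) → lam₂ w₀ = lam₀ →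
          (∃ W₂ ∈ 𝓝 (w₀, lam₀), ∀ p ∈ W₂, (charDet P p.1 p.2 = 0 ↔ p.2 = lam₂ p.1)) →
          lam₁ =ᶠ[𝓝 w₀] lam₂))) ∧
    (∀ lam₀ : ℂ, lam₀ ∈ SigmaSet P \ (SigmaWs P ∪ SigmaInf P) →
      ∃ U : Set (EuclideanSpace ℝ (Fin d)), IsOpen U ∧ SigmaLam P lam₀ ⊆ U ∧
      ∃ W ∈ 𝓝ˢ (SigmaLam P lam₀ ×ˢ ({lam₀} : Set ℂ)),
      ∃ lamf : EuclideanSpace ℝ (Fin d) → ℂ,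
        ContDiffOn ℝ (⊤ : ℕ∞) lamf U ∧
        ∀ p ∈ W, (charDet P p.1 p.2 = 0 ↔ p.2 = lamf p.1)) := by
  have hn : ((⊤ : ℕ∞) : WithTop ℕ∞) ≠ 0 := by simp
  refine ⟨fun w₀ lam₀ h => ⟨?_, ?_⟩, fun lam₀ h => ?_⟩
  · obtain ⟨U, hUo, hw₀U, ε, hε, g, hg, hgw₀, hgraph⟩ := exists_local_eigenvalue_graph hn hsmooth h
    exact ⟨U, hUo.mem_nhds hw₀U, U ×ˢ Metric.ball lam₀ ε,
      prod_mem_nhds (hUo.mem_nhds hw₀U) (Metric.ball_mem_nhds _ hε), g, hg, hgw₀,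
      fun p hp => hgraph p.1 hp.1 p.2 hp.2⟩
  · rintro lam₁ lam₂ ⟨U₁, hU₁, hlam₁⟩ hlam₁w₀ hW₁ - - hW₂
    exact eventuallyEq_of_eventually_mem_iff_eq (Z := {p | charDet P p.1 p.2 = 0})
      (hlam₁.continuousOn.continuousAt hU₁) hlam₁w₀ (eventually_iff_exists_mem.2 hW₁)
      (eventually_iff_exists_mem.2 hW₂)
  · exact exists_contDiffOn_graph_of_forall_local {p | charDet P p.1 p.2 = 0} _ lam₀
      fun w hw => exists_local_eigenvalue_graph hn hsmooth
        ⟨(mem_omegaSet_one_iff (p := (w, lam₀))).2 hw, fun hΞ => h.2 (Or.inl ⟨_, hΞ, rfl⟩)⟩
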